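/- arXiv:2408.16483 — 8 statements merged into one kernel-verified Lean document; each statement's English description precedes it below -/
import Mathlib

section
/- Fix L₀ > 0 and v with 0 < |v| < 1, and let L(t) = L₀ + v t. Then the function R(ξ) = 2·ln(1 + (v/L₀)ξ) / ln((1+v)/(1-v)) satisfies R(t + L(t)) - R(t - L(t)) = 2 for all t ≥ 0 with 1 + (v/L₀)(t - L(t)) > 0. -/
theorem moore_linear_R (L₀ v : ℝ) (hL : 0 < L₀) (hv0 : 0 < |v|) (hv1 : |v| < 1)
    (t : ℝ) (ht : 0 ≤ t)
    (hpos : 0 < 1 + (v / L₀) * (t - (L₀ + v * t))) :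
    2 * Real.log (1 + (v / L₀) * (t + (L₀ + v * t))) / Real.log ((1 + v) / (1 - v)) -
    2 * Real.log (1 + (v / L₀) * (t - (L₀ + v * t))) / Real.log ((1 + v) / (1 - v)) = 2 := by
  have hv1' : -1 < v ∧ v < 1 := abs_lt.mp hv1
  have h1p : 0 < 1 + v := by linarith [hv1'.1]
  have h1m : 0 < 1 - v := by linarith [hv1'.2]
  have hvne : v ≠ 0 := by intro h; simp [h] at hv0
  have hLne : L₀ ≠ 0 := ne_of_gt hL
  have hu : 1 + (v / L₀) * (t - (L₀ + v * t)) = (1 - v) * (1 + v * t / L₀) := by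
    field_simp; ring
  have hu' : 1 + (v / L₀) * (t + (L₀ + v * t)) = (1 + v) * (1 + v * t / L₀) := by
    field_simp; ring
  have hU : 0 < 1 + v * t / L₀ := by
    have h := hpos; rw [hu] at h
    nlinarith
  have hK : Real.log ((1 + v) / (1 - v)) = Real.log (1 + v) - Real.log (1 - v) :=
    Real.log_div (ne_of_gt h1p) (ne_of_gt h1m)
  have hKne : Real.log ((1 + v) / (1 - v)) ≠ 0 := by
    have hne : (1 + v) / (1 - v) ≠ 1 := by
      intro h
      have : 1 + v = 1 - v := by field_simp at h; linarith
      exact hvne (by linarith)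
    have hpos' : 0 < (1 + v) / (1 - v) := div_pos h1p h1m
    exact Real.log_ne_zero_of_pos_of_ne_one hpos' hne
  rw [hu, hu', Real.log_mul (ne_of_gt h1p) (ne_of_gt hU),
    Real.log_mul (ne_of_gt h1m) (ne_of_gt hU), hK]
  have hD : Real.log (1 + v) - Real.log (1 - v) ≠ 0 := hK ▸ hKne
  field_simp
  ring
end

section
/- Let A > 0, k > 0, ξ₀ ∈ ℝ, and define R(ξ) = A·sinh(k(ξ - ξ₀)) and L(t) = (1/k)·arcsinh((1/A)·sech(k(t - ξ₀))). Then R(t + L(t)) - R(t - L(t)) = 2 for all t ∈ ℝ. -/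
theorem sinh_R_inverse_method (A k ξ₀ : ℝ) (hA : 0 < A) (hk : 0 < k) (t : ℝ) :
    A * Real.sinh (k * ((t + (1 / k) * Real.arsinh ((1 / A) * (1 / Real.cosh (k * (t - ξ₀))))) - ξ₀)) -
    A * Real.sinh (k * ((t - (1 / k) * Real.arsinh ((1 / A) * (1 / Real.cosh (k * (t - ξ₀))))) - ξ₀)) = 2 := by
  set s := Real.arsinh ((1 / A) * (1 / Real.cosh (k * (t - ξ₀)))) with hs
  have h1 : k * ((t + (1 / k) * s) - ξ₀) = k * (t - ξ₀) + s := by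
    field_simp; ring
  have h2 : k * ((t - (1 / k) * s) - ξ₀) = k * (t - ξ₀) - s := by
    field_simp; ring
  rw [h1, h2, Real.sinh_add, Real.sinh_sub, hs, Real.sinh_arsinh]
  have hc : Real.cosh (k * (t - ξ₀)) ≠ 0 := (Real.cosh_pos _).ne'
  field_simp
  ring
end

section
/- Define a sequence (c_ℓ) by c₀ = 1 and c_ℓ = -∑_{i=1}^{ℓ} c_{ℓ-i}/(2i+1) for ℓ ≥ 1. Then for all real x with 0 < |x| < 1, the power series ∑_{ℓ=0}^{∞} c_ℓ x^{2ℓ} converges and equals 2x / ln((1+x)/(1-x)). -/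
/-!
With `a n = 1 / (2n + 1)`, the recursion says exactly that `(∑ c n yⁿ) (∑ a n yⁿ) = 1` as formal
power series, and `∑ a n x²ⁿ = log ((1 + x) / (1 - x)) / (2x)` for `|x| < 1`. Both series converge
absolutely at `y = x²` because `|c n| ≤ 1`: the sequence `a` is log-convex, so by Kaluza's theorem
the coefficients of its reciprocal satisfy `c n ≤ 0` for `n ≥ 1`, and the recursion then gives
`c n ≥ -a n ≥ -1`. The Cauchy product of the two convergent series is `1`.
-/

open Finset

theorem sum_range_succ_mul_sub_eq_add_sum_Icc {R : Type*} [CommSemiring R] (a c : ℕ → R) (n : ℕ) :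
    ∑ k ∈ range (n + 1), c k * a (n - k) = c n * a 0 + ∑ i ∈ Icc 1 n, c (n - i) * a i := by
  rw [← sum_range_reflect, Nat.range_succ_eq_Icc_zero, ← add_sum_Ioc_eq_sum_Icc n.zero_le,
    ← Icc_add_one_left_eq_Ioc, zero_add]
  refine congrArg₂ _ (by simp) (sum_congr rfl fun i hi => ?_)
  rw [Nat.add_sub_cancel, Nat.sub_sub_self (mem_Icc.1 hi).2]

namespace Kaluza

variable {a c : ℕ → ℝ}

theorem mul_zero_eq_neg_sum_range {n : ℕ} (h : ∑ k ∈ range (n + 1), c k * a (n - k) = 0) :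
    c n * a 0 = -∑ k ∈ range n, c k * a (n - k) := by
  rw [sum_range_succ, Nat.sub_self] at h
  linarith

theorem le_ratio_mul (ha : ∀ n, 0 < a n) (hratio : Monotone fun n => a (n + 1) / a n)
    {m p : ℕ} (hmp : m ≤ p) : a (m + 1) ≤ a (p + 1) / a p * a m :=
  (div_le_iff₀ (ha m)).1 (hratio hmp)

/-- Kaluza's theorem. For `n ≥ 2`, subtracting `a n / a (n - 1)` times the relation at `n - 1`
from the relation at `n` kills the `c 0` term and leaves only products of two nonpositive
factors. -/
theorem nonpos (ha : ∀ n, 0 < a n) (hratio : Monotone fun n => a (n + 1) / a n)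
    (hc0 : 0 ≤ c 0) (hconv : ∀ n, 1 ≤ n → ∑ k ∈ range (n + 1), c k * a (n - k) = 0) :
    ∀ n, 1 ≤ n → c n ≤ 0 := by
  intro n
  induction n using Nat.strong_induction_on with
  | _ n ih =>
  intro hn
  have hlast := mul_zero_eq_neg_sum_range (hconv n hn)
  suffices c n * a 0 ≤ 0 from nonpos_of_mul_nonpos_left this (ha 0)
  obtain rfl | ⟨m, rfl⟩ : n = 1 ∨ ∃ m, n = m + 2 := by
    rcases n with _ | _ | m
    · omega
    · exact .inl rfl
    · exact .inr ⟨m, rfl⟩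
  · simpa [hlast] using mul_nonneg hc0 (ha 1).le
  set r := a (m + 2) / a (m + 1)
  have hdiff :
      c (m + 2) * a 0 = -∑ k ∈ range (m + 2), c k * (a (m + 2 - k) - r * a (m + 1 - k)) := by
    have hsplit : ∑ k ∈ range (m + 2), c k * (a (m + 2 - k) - r * a (m + 1 - k)) =
        ∑ k ∈ range (m + 2), c k * a (m + 2 - k) -
          r * ∑ k ∈ range (m + 2), c k * a (m + 1 - k) := by
      rw [mul_sum, ← sum_sub_distrib]
      exact sum_congr rfl fun k _ => by ring
    rw [hlast, hsplit, hconv (m + 1) le_add_self, mul_zero, sub_zero]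
  rw [hdiff, neg_nonpos]
  refine sum_nonneg fun k hk => ?_
  rcases Nat.eq_zero_or_pos k with rfl | hk1
  · simp [r, div_mul_cancel₀ _ (ha (m + 1)).ne']
  · have hcoef : a (m + 2 - k) ≤ r * a (m + 1 - k) := by
      have := le_ratio_mul ha hratio (Nat.sub_le (m + 1) k)
      rwa [show m + 1 - k + 1 = m + 2 - k by grind] at this
    exact mul_nonneg_of_nonpos_of_nonpos (ih k (mem_range.1 hk) hk1) (by linarith)

theorem neg_mul_le (ha : ∀ n, 0 < a n) (hratio : Monotone fun n => a (n + 1) / a n)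
    (hc0 : 0 ≤ c 0) (hconv : ∀ n, 1 ≤ n → ∑ k ∈ range (n + 1), c k * a (n - k) = 0)
    {n : ℕ} (hn : 1 ≤ n) : -(c 0 * a n) ≤ c n * a 0 := by
  obtain ⟨m, rfl⟩ := Nat.exists_eq_add_of_le' hn
  have hrest : ∑ k ∈ range m, c (k + 1) * a (m + 1 - (k + 1)) ≤ 0 :=
    sum_nonpos fun k _ =>
      mul_nonpos_of_nonpos_of_nonneg (nonpos ha hratio hc0 hconv _ le_add_self) (ha _).le
  rw [mul_zero_eq_neg_sum_range (hconv _ hn), sum_range_succ', Nat.sub_zero]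
  linarith

end Kaluza

theorem tsum_mul_tsum_eq_one_of_convolution {R : Type*} [NormedCommRing R] [CompleteSpace R]
    {a c : ℕ → R} {y : R} (hc : Summable fun n => ‖c n * y ^ n‖)
    (ha : Summable fun n => ‖a n * y ^ n‖) (h0 : c 0 * a 0 = 1)
    (hconv : ∀ n, 1 ≤ n → ∑ k ∈ range (n + 1), c k * a (n - k) = 0) :
    (∑' n, c n * y ^ n) * ∑' n, a n * y ^ n = 1 := by
  refine (hasSum_sum_range_mul_of_summable_norm hc ha).unique ?_
  have hterm : ∀ n, ∑ k ∈ range (n + 1), c k * y ^ k * (a (n - k) * y ^ (n - k)) =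
      (∑ k ∈ range (n + 1), c k * a (n - k)) * y ^ n := by
    intro n
    rw [sum_mul]
    refine sum_congr rfl fun k hk => ?_
    rw [← pow_sub_mul_pow y (Nat.le_of_lt_succ (mem_range.1 hk))]
    ring
  simp_rw [hterm]
  convert hasSum_single (f := fun n => (∑ k ∈ range (n + 1), c k * a (n - k)) * y ^ n) 0 ?_
  · simp [h0]
  · intro n hn
    rw [hconv n (Nat.one_le_iff_ne_zero.2 hn), zero_mul]

theorem summable_norm_mul_pow_of_abs_le {u : ℕ → ℝ} {C y : ℝ} (hu : ∀ n, |u n| ≤ C)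
    (hy : |y| < 1) : Summable fun n => ‖u n * y ^ n‖ := by
  refine Summable.of_nonneg_of_le (fun n => norm_nonneg _) (fun n => ?_)
    ((summable_geometric_of_lt_one (abs_nonneg y) hy).mul_left C)
  rw [Real.norm_eq_abs, abs_mul, abs_pow]
  exact mul_le_mul_of_nonneg_right (hu n) (by positivity)

noncomputable def oddRecip (n : ℕ) : ℝ := 1 / (2 * n + 1)

theorem oddRecip_zero : oddRecip 0 = 1 := by simp [oddRecip]

theorem oddRecip_pos (n : ℕ) : 0 < oddRecip n := by unfold oddRecip; positivity

theorem oddRecip_le_one (n : ℕ) : oddRecip n ≤ 1 :=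
  div_le_one_of_le₀ (by linarith [n.cast_nonneg (α := ℝ)]) (by positivity)

theorem monotone_oddRecip_succ_div : Monotone fun n => oddRecip (n + 1) / oddRecip n := by
  refine monotone_nat_of_le_succ fun n => ?_
  simp only [oddRecip]
  rw [div_le_div_iff₀ (by positivity) (by positivity)]
  field_simp
  push_cast
  nlinarith

theorem hasSum_oddRecip_mul_sq_pow {x : ℝ} (hx0 : x ≠ 0) (hx : |x| < 1) :
    HasSum (fun n => oddRecip n * (x ^ 2) ^ n) (Real.log ((1 + x) / (1 - x)) / (2 * x)) := by
  obtain ⟨hx₁, hx₂⟩ := abs_lt.1 hx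
  have h := (Real.hasSum_log_sub_log_of_abs_lt_one hx).div_const (2 * x)
  rw [← Real.log_div (by linarith) (by linarith)] at h
  refine h.congr_fun fun n => ?_
  simp only [oddRecip]
  field_simp
  ring

theorem sum_range_mul_oddRecip_eq_zero {c : ℕ → ℝ}
    (hrec : ∀ ℓ : ℕ, 1 ≤ ℓ → c ℓ = -∑ i ∈ Icc 1 ℓ, c (ℓ - i) / (2 * (i : ℝ) + 1)) :
    ∀ n, 1 ≤ n → ∑ k ∈ range (n + 1), c k * oddRecip (n - k) = 0 := by
  intro n hn
  rw [sum_range_succ_mul_sub_eq_add_sum_Icc, oddRecip_zero, mul_one, hrec n hn]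
  simp only [oddRecip, mul_one_div, neg_add_cancel]

theorem abs_le_one_of_sum_range_mul_oddRecip_eq_zero {c : ℕ → ℝ} (hc0 : c 0 = 1)
    (hconv : ∀ n, 1 ≤ n → ∑ k ∈ range (n + 1), c k * oddRecip (n - k) = 0) (n : ℕ) :
    |c n| ≤ 1 := by
  rcases Nat.eq_zero_or_pos n with rfl | hn
  · simp [hc0]
  have hc0' : 0 ≤ c 0 := hc0 ▸ zero_le_one
  have hlower := Kaluza.neg_mul_le oddRecip_pos monotone_oddRecip_succ_div hc0' hconv hn
  have hupper := Kaluza.nonpos oddRecip_pos monotone_oddRecip_succ_div hc0' hconv n hn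
  rw [hc0, one_mul, oddRecip_zero, mul_one] at hlower
  exact abs_le.2 ⟨by linarith [oddRecip_le_one n], by linarith⟩

theorem moore_linear_coeff_series (c : ℕ → ℝ) (hc0 : c 0 = 1)
    (hrec : ∀ ℓ : ℕ, 1 ≤ ℓ → c ℓ = -∑ i ∈ Finset.Icc 1 ℓ, c (ℓ - i) / (2 * (i : ℝ) + 1)) :
    ∀ x : ℝ, 0 < |x| → |x| < 1 →
      HasSum (fun ℓ : ℕ => c ℓ * x ^ (2 * ℓ)) (2 * x / Real.log ((1 + x) / (1 - x))) := by
  intro x hx0 hx1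
  have hy : |x ^ 2| < 1 := by
    rw [abs_pow]
    exact pow_lt_one₀ (abs_nonneg x) hx1 two_ne_zero
  have hconv := sum_range_mul_oddRecip_eq_zero hrec
  have hc := summable_norm_mul_pow_of_abs_le
    (abs_le_one_of_sum_range_mul_oddRecip_eq_zero hc0 hconv) hy
  have ha := summable_norm_mul_pow_of_abs_le
    (fun n => (abs_of_pos (oddRecip_pos n)).trans_le (oddRecip_le_one n)) hy
  have hprod := tsum_mul_tsum_eq_one_of_convolution hc ha (by rw [hc0, oddRecip_zero, one_mul])
    hconv
  rw [(hasSum_oddRecip_mul_sq_pow (abs_pos.1 hx0) hx1).tsum_eq] at hprod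
  simp_rw [pow_mul]
  rw [← inv_div, ← eq_inv_of_mul_eq_one_left hprod]
  exact hc.of_norm.hasSum
end

section
/- Define c₀ = 1 and c_ℓ = -∑_{i=1}^{ℓ} c_{ℓ-i}/(2i+1) for ℓ ≥ 1. Then for all v with 0 < |v| < 1, ln((1+v)/(1-v)) · ∑_{ℓ=0}^{∞} c_ℓ v^{2ℓ-1} = 2. -/
open Finset

private lemma moore_aux (c : ℕ → ℝ) (hc0 : c 0 = 1)
    (hrec : ∀ ℓ : ℕ, 1 ≤ ℓ → c ℓ = -∑ i ∈ Finset.Icc 1 ℓ, c (ℓ - i) / (2 * (i : ℝ) + 1)) :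
    ∀ n : ℕ, 1 ≤ n → 0 ≤ -c n ∧ -c n ≤ 1 / (2 * (n : ℝ) + 1) := by
  set T : ℕ → ℝ := fun m => ∑ i ∈ Finset.range m, (1 / (2 * (i : ℝ) + 3)) * (-(c (m - i)))
    with hT
  have key : ∀ m : ℕ, -c (m + 1) = 1 / (2 * ((m : ℝ) + 1) + 1) - T m := by
    intro m
    have h := hrec (m + 1) (by omega)
    rw [← Finset.Ico_add_one_right_eq_Icc, Finset.sum_Ico_eq_sum_range] at h
    have hms : m + 1 + 1 - 1 = m + 1 := by omega
    rw [hms] at h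
    rw [Finset.sum_range_succ] at h
    have e1 : ∀ i ∈ Finset.range m, c (m + 1 - (1 + i)) / (2 * ((1 + i : ℕ) : ℝ) + 1)
        = -((1 / (2 * (i : ℝ) + 3)) * (-(c (m - i)))) := by
      intro i hi
      have : m + 1 - (1 + i) = m - i := by omega
      rw [this]
      push_cast
      ring
    rw [Finset.sum_congr rfl e1, Finset.sum_neg_distrib] at h
    have : m + 1 - (1 + m) = 0 := by omega
    rw [this, hc0] at h
    rw [h, hT]
    push_cast
    ring
  have claim : ∀ m : ℕ, T m ≤ 1 / (2 * ((m : ℝ) + 1) + 1) := by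
    intro m
    induction m using Nat.strong_induction_on with
    | _ m IH =>
      match m with
      | 0 => simp [hT]; positivity
      | Nat.succ m =>
        have hd : ∀ k : ℕ, k ≤ m → 0 ≤ -c (k + 1) := by
          intro k hk
          rw [key k]
          have := IH k (by omega)
          linarith
        have hsplit : T (m + 1)
            = (∑ i ∈ Finset.range m, (1 / (2 * ((i : ℝ) + 1) + 3)) * (-(c (m - i))))
              + (1 / 3) * (-(c (m + 1))) := by
          rw [hT]
          simp only []
          rw [Finset.sum_range_succ']
          congr 1
          · refine Finset.sum_congr rfl fun i hi => ?_
            have : m + 1 - (i + 1) = m - i := by omega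
            rw [this]
            push_cast
            ring
          · norm_num
        set q : ℝ := (2 * (m : ℝ) + 3) / (2 * (m : ℝ) + 5) with hq
        have hm0 : (0:ℝ) ≤ (m:ℝ) := Nat.cast_nonneg m
        have hstep : ∑ i ∈ Finset.range m, (1 / (2 * ((i : ℝ) + 1) + 3)) * (-(c (m - i)))
            ≤ q * T m := by
          rw [hT, Finset.mul_sum]
          refine Finset.sum_le_sum fun i hi => ?_
          simp only [Finset.mem_range] at hi
          have him : (i : ℝ) ≤ (m : ℝ) - 1 := by
            have : (i : ℝ) + 1 ≤ (m : ℝ) := by exact_mod_cast hi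
            linarith
          have hd' : 0 ≤ -c (m - i) := by
            have h2 : m - i = (m - i - 1) + 1 := by omega
            rw [h2]; exact hd (m - i - 1) (by omega)
          rw [← mul_assoc]
          apply mul_le_mul_of_nonneg_right _ hd'
          rw [hq, div_mul_eq_mul_div, mul_one_div, div_div,
            div_le_div_iff₀ (by positivity) (by positivity)]
          nlinarith
        have hTm := IH m (by omega)
        have hkey := key m
        have hq13 : (1:ℝ)/3 ≤ q := by
          rw [hq, le_div_iff₀ (by positivity)]; nlinarith
        have hfin : q * (1 / (2 * ((m : ℝ) + 1) + 1)) = 1 / (2 * ((m : ℝ) + 1 + 1) + 1) := by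
          rw [hq]
          field_simp
          ring
        have hcast : ((Nat.succ m : ℕ) : ℝ) = (m : ℝ) + 1 := by push_cast; ring
        rw [hcast]
        calc T (m + 1) = (∑ i ∈ Finset.range m, (1 / (2 * ((i : ℝ) + 1) + 3)) * (-(c (m - i))))
              + (1/3) * (-(c (m+1))) := hsplit
          _ ≤ q * T m + (1/3) * (1 / (2 * ((m : ℝ) + 1) + 1) - T m) := by
              rw [hkey]; linarith
          _ = (1/3) * (1 / (2 * ((m : ℝ) + 1) + 1)) + (q - 1/3) * T m := by ring
          _ ≤ (1/3) * (1 / (2 * ((m : ℝ) + 1) + 1))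
              + (q - 1/3) * (1 / (2 * ((m : ℝ) + 1) + 1)) := by nlinarith
          _ = q * (1 / (2 * ((m : ℝ) + 1) + 1)) := by ring
          _ = 1 / (2 * ((m : ℝ) + 1 + 1) + 1) := hfin
  intro n hn
  obtain ⟨m, rfl⟩ : ∃ m, n = m + 1 := ⟨n - 1, by omega⟩
  have hTnn : 0 ≤ T m := by
    apply Finset.sum_nonneg
    intro i hi
    simp only [Finset.mem_range] at hi
    apply mul_nonneg (by positivity)
    have h2 : m - i = (m - i - 1) + 1 := by omega
    rw [h2, key]
    have := claim (m - i - 1)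
    linarith
  rw [key m]
  have := claim m
  constructor
  · linarith
  · push_cast
    linarith

theorem moore_linear_boundary_series (c : ℕ → ℝ) (hc0 : c 0 = 1)
    (hrec : ∀ ℓ : ℕ, 1 ≤ ℓ → c ℓ = -∑ i ∈ Finset.Icc 1 ℓ, c (ℓ - i) / (2 * (i : ℝ) + 1)) :
    ∀ v : ℝ, 0 < |v| → |v| < 1 →
      HasSum (fun ℓ : ℕ => Real.log ((1 + v) / (1 - v)) * (c ℓ * v ^ (2 * (ℓ : ℤ) - 1))) 2 := by
  have moore_aux := moore_aux c hc0 hrec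
  intro v hv0 hv1
  have hv : v ≠ 0 := by simpa [abs_pos] using hv0
  have hvsq : |v| ^ 2 < 1 := by nlinarith [abs_nonneg v]
  have hcb : ∀ ℓ, |c ℓ| ≤ 1 := by
    intro ℓ
    match ℓ with
    | 0 => simp [hc0]
    | Nat.succ m =>
      obtain ⟨h1, h2⟩ := moore_aux (m + 1) (by omega)
      have hp : (0:ℝ) ≤ ((m:ℝ) : ℝ) := Nat.cast_nonneg m
      have ha : 1 / (2 * ((m:ℝ) + 1) + 1) ≤ 1 := by
        rw [div_le_one (by positivity)]
        linarith
      simp only [Nat.succ_eq_add_one]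
      rw [abs_le]
      push_cast at h2 ⊢
      constructor <;> linarith
  -- summability of g ℓ = c ℓ * v^(2ℓ)
  have hgn : Summable fun ℓ : ℕ => ‖c ℓ * v ^ (2 * ℓ)‖ := by
    refine Summable.of_nonneg_of_le (fun _ => norm_nonneg _) (fun ℓ => ?_)
      (summable_geometric_of_lt_one (by positivity) hvsq)
    rw [norm_mul, norm_pow, pow_mul]
    calc ‖c ℓ‖ * (‖v‖ ^ 2) ^ ℓ ≤ 1 * (‖v‖ ^ 2) ^ ℓ := by
          apply mul_le_mul_of_nonneg_right (hcb ℓ) (by positivity)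
      _ = (|v| ^ 2) ^ ℓ := by rw [one_mul, Real.norm_eq_abs]
  have hg : HasSum (fun ℓ : ℕ => c ℓ * v ^ (2 * ℓ)) (∑' ℓ : ℕ, c ℓ * v ^ (2 * ℓ)) :=
    hgn.of_norm.hasSum
  set G := ∑' ℓ : ℕ, c ℓ * v ^ (2 * ℓ) with hG
  -- summability of f k = v^(2k+1)/(2k+1)
  have hfn : Summable fun k : ℕ => ‖v ^ (2 * k + 1) / (2 * (k : ℝ) + 1)‖ := by
    refine Summable.of_nonneg_of_le (fun _ => norm_nonneg _) (fun k => ?_)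
      ((summable_geometric_of_lt_one (by positivity) hvsq).mul_left |v|)
    have hk : (0:ℝ) < 2 * (k:ℝ) + 1 := by positivity
    rw [norm_div, norm_pow, Real.norm_eq_abs, Real.norm_eq_abs, abs_of_pos hk]
    calc |v| ^ (2 * k + 1) / (2 * (k:ℝ) + 1) ≤ |v| ^ (2 * k + 1) / 1 := by
          apply div_le_div_of_nonneg_left (by positivity) one_pos (by linarith)
      _ = |v| * (|v| ^ 2) ^ k := by rw [div_one, pow_succ, pow_mul]; ring
  -- log series
  have h1v : (0:ℝ) < 1 - v := by cases' abs_lt.mp hv1 with hl hr; linarith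
  have h1v' : (0:ℝ) < 1 + v := by cases' abs_lt.mp hv1 with hl hr; linarith
  set L := Real.log ((1 + v) / (1 - v)) with hLdef
  have hLsplit : L = Real.log (1 + v) - Real.log (1 - v) :=
    Real.log_div (ne_of_gt h1v') (ne_of_gt h1v)
  have hf : HasSum (fun k : ℕ => v ^ (2 * k + 1) / (2 * (k : ℝ) + 1)) (L / 2) := by
    have h := (Real.hasSum_log_sub_log_of_abs_lt_one hv1).div_const 2
    rw [← hLsplit] at h
    refine h.congr_fun fun k => ?_
    ring
  -- Cauchy product
  have hFG := hasSum_sum_range_mul_of_summable_norm hfn hgn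
  rw [hf.tsum_eq, ← hG] at hFG
  have hconv : ∀ n : ℕ,
      (∑ k ∈ Finset.range (n + 1),
        (v ^ (2 * k + 1) / (2 * (k : ℝ) + 1)) * (c (n - k) * v ^ (2 * (n - k))))
      = if n = 0 then v else 0 := by
    intro n
    have e : ∀ k ∈ Finset.range (n + 1),
        (v ^ (2 * k + 1) / (2 * (k : ℝ) + 1)) * (c (n - k) * v ^ (2 * (n - k)))
        = v ^ (2 * n + 1) * (c (n - k) / (2 * (k : ℝ) + 1)) := by
      intro k hk
      simp only [Finset.mem_range] at hk
      have hpow : 2 * n + 1 = (2 * k + 1) + 2 * (n - k) := by omega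
      rw [hpow, pow_add]
      ring
    rw [Finset.sum_congr rfl e, ← Finset.mul_sum]
    match n with
    | 0 => simp [hc0]
    | Nat.succ m =>
      have hS : ∑ k ∈ Finset.range (m + 1 + 1), c (m + 1 - k) / (2 * (k : ℝ) + 1) = 0 := by
        rw [Finset.sum_range_succ']
        have h := hrec (m + 1) (by omega)
        rw [← Finset.Ico_add_one_right_eq_Icc, Finset.sum_Ico_eq_sum_range] at h
        have hms : m + 1 + 1 - 1 = m + 1 := by omega
        rw [hms] at h
        have e2 : ∀ i ∈ Finset.range (m + 1), c (m + 1 - (1 + i)) / (2 * ((1 + i : ℕ) : ℝ) + 1)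
            = c (m + 1 - (i + 1)) / (2 * ((i : ℕ) : ℝ) + 1 + 2) := by
          intro i hi
          have : 1 + i = i + 1 := by omega
          rw [this]
          push_cast
          ring_nf
        rw [Finset.sum_congr rfl e2] at h
        have e3 : ∀ i ∈ Finset.range (m + 1), c (m + 1 - (i + 1)) / (2 * ((i + 1 : ℕ) : ℝ) + 1)
            = c (m + 1 - (i + 1)) / (2 * ((i : ℕ) : ℝ) + 1 + 2) := by
          intro i hi
          push_cast
          ring_nf
        rw [Finset.sum_congr rfl e3]
        simp only [Nat.sub_zero, Nat.cast_zero]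
        norm_num
        linarith [h]
      simp only [Nat.succ_ne_zero, if_false]
      rw [hS, mul_zero]
  have hFG2 : HasSum (fun n : ℕ => if n = 0 then v else 0) (L / 2 * G) := by
    refine hFG.congr_fun fun n => (hconv n).symm ▸ rfl
  have hGv : L / 2 * G = v := hFG2.unique (hasSum_ite_eq 0 v)
  have hL : L ≠ 0 := by
    intro h
    rcases Real.log_eq_zero.mp h with h' | h' | h'
    · rcases div_eq_zero_iff.mp h' with h'' | h''
      · linarith
      · linarith
    · rw [div_eq_one_iff_eq (ne_of_gt h1v)] at h'
      have : v = 0 := by linarith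
      exact hv this
    · have : (0:ℝ) < (1 + v) / (1 - v) := by positivity
      linarith
  have hLG : L * G = 2 * v := by linarith [hGv]
  have h2 : L / v * G = 2 := by
    field_simp
    linarith [hLG]
  have hterm : ∀ ℓ : ℕ, L * (c ℓ * v ^ (2 * (ℓ : ℤ) - 1)) = (L / v) * (c ℓ * v ^ (2 * ℓ)) := by
    intro ℓ
    have hz : v ^ (2 * (ℓ : ℤ) - 1) = v ^ (2 * ℓ) / v := by
      rw [zpow_sub₀ hv, zpow_one,
        show (2 * (ℓ : ℤ)) = ((2 * ℓ : ℕ) : ℤ) by push_cast; ring, zpow_natCast]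
    rw [hz]
    field_simp
    try ring
  have hgoal : HasSum (fun ℓ : ℕ => (L / v) * (c ℓ * v ^ (2 * ℓ))) 2 := by
    rw [← h2]
    exact hg.mul_left _
  exact hgoal.congr_fun fun ℓ => (hterm ℓ)
end

section
/- Let L(t) = L₀ + vt with L₀ > 0 and |v| < 1, and define γ₀(t) = 1/L(t) and γ_ℓ(t) = ∑_{i=1}^{ℓ} (-1/(2i+1)!)·L(t)^{2i}·(d^{2i}γ_{ℓ-i}/dt^{2i})(t) for ℓ ≥ 1, on the domain L(t) > 0. Then γ_ℓ(t) = c_ℓ v^{2ℓ} / (L₀ + vt), where c₀ = 1 and c_ℓ = -∑_{i=1}^{ℓ} c_{ℓ-i}/(2i+1). -/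
/-!
By strong induction, `γ k = c k * v ^ (2 * k) / L` on the open half-line `L > 0`, so there its
derivatives are those of `a / L`, the `2i`-th being `a (2i)! v^(2i) / L^(2i+1)`. In the recursion
the factors `L^(2i)` and `(2i)! / (2i+1)!` reduce the `i`-th term to
`-c (ℓ-i) / (2i+1) * v^(2ℓ) / L`, and these sum to `c ℓ * v^(2ℓ) / L`.
-/

open Nat

theorem iteratedDeriv_div_affine {𝕜 : Type*} [NontriviallyNormedField 𝕜] (a b v : 𝕜) (n : ℕ)
    (t : 𝕜) :
    iteratedDeriv n (fun s => a / (b + v * s)) t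
      = a * (-1) ^ n * n ! * v ^ n / (b + v * t) ^ (n + 1) := by
  have hfun : (fun s => a / (b + v * s)) = fun s => a * (v * s + b)⁻¹ := by
    funext s; rw [div_eq_mul_inv, add_comm]
  have hzpow : (v * t + b) ^ (-1 - n : ℤ) = ((b + v * t) ^ (n + 1))⁻¹ := by
    rw [add_comm, ← zpow_natCast, ← zpow_neg]; congr 1; push_cast; ring
  rw [hfun, iteratedDeriv_const_mul_field, iteratedDeriv_eq_iterate, iter_deriv_inv_linear]
  dsimp only
  rw [hzpow]
  ring

theorem iteratedDeriv_eq_div_affine_of_eqOn_pos {f : ℝ → ℝ} {a b v t : ℝ} (n : ℕ)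
    (hf : ∀ s, 0 < b + v * s → f s = a / (b + v * s)) (ht : 0 < b + v * t) :
    iteratedDeriv n f t = a * (-1) ^ n * n ! * v ^ n / (b + v * t) ^ (n + 1) := by
  have hopen : IsOpen {s : ℝ | 0 < b + v * s} := isOpen_lt continuous_const (by fun_prop)
  have hloc : f =ᶠ[nhds t] fun s => a / (b + v * s) :=
    Filter.eventuallyEq_of_mem (hopen.mem_nhds ht) hf
  rw [hloc.iteratedDeriv_eq, iteratedDeriv_div_affine]

theorem neg_div_factorial_mul_pow_mul_even_deriv {L : ℝ} (hL : L ≠ 0) (a v : ℝ) (i : ℕ) :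
    (-1 / (2 * i + 1)! : ℝ) * L ^ (2 * i) *
        (a * (-1) ^ (2 * i) * (2 * i)! * v ^ (2 * i) / L ^ (2 * i + 1))
      = -(a / (2 * i + 1)) * v ^ (2 * i) / L := by
  have hfact : ((2 * i + 1)! : ℝ) = (2 * i + 1) * (2 * i)! := by
    rw [factorial_succ]; push_cast; ring
  rw [hfact, (even_two_mul i).neg_one_pow]
  field_simp
  ring

theorem moore_gamma_linear_general (L₀ v : ℝ)
    (γ : ℕ → ℝ → ℝ) (c : ℕ → ℝ)
    (hγ0 : ∀ t : ℝ, 0 < L₀ + v * t → γ 0 t = 1 / (L₀ + v * t))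
    (hγ : ∀ ℓ : ℕ, 1 ≤ ℓ → ∀ t : ℝ, 0 < L₀ + v * t →
      γ ℓ t = ∑ i ∈ Finset.Icc 1 ℓ,
        (-1 / (Nat.factorial (2 * i + 1)) : ℝ) * (L₀ + v * t) ^ (2 * i) * iteratedDeriv (2 * i) (γ (ℓ - i)) t)
    (hc0 : c 0 = 1)
    (hcrec : ∀ ℓ : ℕ, 1 ≤ ℓ → c ℓ = -∑ i ∈ Finset.Icc 1 ℓ, c (ℓ - i) / (2 * (i : ℝ) + 1)) :
    ∀ ℓ : ℕ, ∀ t : ℝ, 0 < L₀ + v * t → γ ℓ t = c ℓ * v ^ (2 * ℓ) / (L₀ + v * t) := by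
  intro ℓ
  induction ℓ using Nat.strong_induction_on with
  | _ ℓ ih =>
  intro t ht
  rcases Nat.eq_zero_or_pos ℓ with rfl | hℓ
  · rw [hγ0 t ht, hc0, mul_zero, pow_zero, mul_one]
  have hterm : ∀ i ∈ Finset.Icc 1 ℓ,
      (-1 / (2 * i + 1)! : ℝ) * (L₀ + v * t) ^ (2 * i) * iteratedDeriv (2 * i) (γ (ℓ - i)) t
        = -(c (ℓ - i) / (2 * i + 1)) * v ^ (2 * ℓ) / (L₀ + v * t) := by
    intro i hi
    obtain ⟨hi1, hiℓ⟩ := Finset.mem_Icc.1 hi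
    have hpow : v ^ (2 * ℓ) = v ^ (2 * (ℓ - i)) * v ^ (2 * i) := by
      rw [← pow_add, ← Nat.mul_add, Nat.sub_add_cancel hiℓ]
    rw [iteratedDeriv_eq_div_affine_of_eqOn_pos _ (ih (ℓ - i) (by omega)) ht,
      neg_div_factorial_mul_pow_mul_even_deriv ht.ne', hpow]
    ring
  rw [hγ ℓ hℓ t ht, Finset.sum_congr rfl hterm, hcrec ℓ hℓ, ← Finset.sum_div, ← Finset.sum_mul,
    Finset.sum_neg_distrib]

theorem moore_gamma_linear (L₀ v : ℝ) (hL : 0 < L₀) (hv : |v| < 1)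
    (γ : ℕ → ℝ → ℝ) (c : ℕ → ℝ)
    (hγ0 : ∀ t : ℝ, 0 < L₀ + v * t → γ 0 t = 1 / (L₀ + v * t))
    (hγ : ∀ ℓ : ℕ, 1 ≤ ℓ → ∀ t : ℝ, 0 < L₀ + v * t →
      γ ℓ t = ∑ i ∈ Finset.Icc 1 ℓ,
        (-1 / (Nat.factorial (2 * i + 1)) : ℝ) * (L₀ + v * t) ^ (2 * i) * iteratedDeriv (2 * i) (γ (ℓ - i)) t)
    (hc0 : c 0 = 1)
    (hcrec : ∀ ℓ : ℕ, 1 ≤ ℓ → c ℓ = -∑ i ∈ Finset.Icc 1 ℓ, c (ℓ - i) / (2 * (i : ℝ) + 1)) :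
    ∀ ℓ : ℕ, ∀ t : ℝ, 0 < L₀ + v * t → γ ℓ t = c ℓ * v ^ (2 * ℓ) / (L₀ + v * t) :=
  moore_gamma_linear_general L₀ v γ c hγ0 hγ hc0 hcrec
end

section
/- Let L(t) = e^{-kt} with k > 0, and define γ₀(t) = 1/L(t) = e^{kt} and γ_ℓ(t) = ∑_{i=1}^{ℓ} (-1/(2i+1)!)·L(t)^{2i}·(d^{2i}γ_{ℓ-i}/dt^{2i})(t) for ℓ ≥ 1. Then γ_ℓ(t) = c_ℓ k^{2ℓ} e^{(1-2ℓ)kt}, where c₀ = 1 and c_ℓ = -∑_{i=1}^{ℓ} ((2ℓ-2i-1)^{2i}/(2i+1)!)·c_{ℓ-i} for ℓ ≥ 1. -/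
/-! Each `γ ℓ` is a multiple of `exp ((1 - 2ℓ) k t)`: by strong induction, the `2i`-th derivative
of `γ (ℓ - i)` brings down `((1 - 2(ℓ - i)) k) ^ (2i) = (2ℓ - 2i - 1) ^ (2i) k ^ (2i)`, and the
factor `L(t) ^ (2i) = exp (-2ikt)` shifts the exponent to `(1 - 2ℓ) k t`, so summing over `i`
reproduces the recurrence for `c ℓ`. -/

open Real

theorem exp_neg_mul_pow_mul_iteratedDeriv_exp (a k t : ℝ) (m i : ℕ) :
    exp (-k * t) ^ (2 * i) *
        iteratedDeriv (2 * i) (fun s => a * k ^ (2 * m) * exp ((1 - 2 * (m : ℝ)) * k * s)) t =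
      (2 * (m : ℝ) - 1) ^ (2 * i) * a * k ^ (2 * (m + i)) *
        exp ((1 - 2 * ((m + i : ℕ) : ℝ)) * k * t) := by
  have hderiv : (1 - 2 * (m : ℝ)) ^ (2 * i) = (2 * (m : ℝ) - 1) ^ (2 * i) := by
    rw [← neg_sub, Even.neg_pow ⟨i, two_mul i⟩]
  have hexp : exp (-k * t) ^ (2 * i) * exp ((1 - 2 * (m : ℝ)) * k * t) =
      exp ((1 - 2 * ((m + i : ℕ) : ℝ)) * k * t) := by
    rw [← exp_nat_mul, ← exp_add]
    push_cast
    ring_nf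
  simp only [iteratedDeriv_const_mul_field, iteratedDeriv_exp_const_mul, mul_pow, hderiv,
    ← hexp]
  ring

theorem moore_gamma_exponential_general (k : ℝ)
    (γ : ℕ → ℝ → ℝ) (c : ℕ → ℝ)
    (hγ0 : ∀ t : ℝ, γ 0 t = Real.exp (k * t))
    (hγ : ∀ ℓ : ℕ, 1 ≤ ℓ → ∀ t : ℝ,
      γ ℓ t = ∑ i ∈ Finset.Icc 1 ℓ,
        (-1 / (Nat.factorial (2 * i + 1)) : ℝ) * (Real.exp (-k * t)) ^ (2 * i) *
          iteratedDeriv (2 * i) (γ (ℓ - i)) t)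
    (hc0 : c 0 = 1)
    (hcrec : ∀ ℓ : ℕ, 1 ≤ ℓ →
      c ℓ = -∑ i ∈ Finset.Icc 1 ℓ,
        ((2 * (ℓ : ℝ) - 2 * (i : ℝ) - 1) ^ (2 * i) / (Nat.factorial (2 * i + 1)) : ℝ) * c (ℓ - i)) :
    ∀ ℓ : ℕ, ∀ t : ℝ, γ ℓ t = c ℓ * k ^ (2 * ℓ) * Real.exp ((1 - 2 * (ℓ : ℝ)) * k * t) := by
  intro ℓ
  induction ℓ using Nat.strong_induction_on with
  | _ ℓ ih =>
    intro t
    rcases Nat.eq_zero_or_pos ℓ with rfl | hℓ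
    · simp [hγ0, hc0]
    rw [hγ ℓ hℓ t, hcrec ℓ hℓ, ← Finset.sum_neg_distrib, Finset.sum_mul, Finset.sum_mul]
    refine Finset.sum_congr rfl fun i hi => ?_
    obtain ⟨hi_pos, hiℓ⟩ := Finset.mem_Icc.mp hi
    obtain ⟨m, rfl⟩ := Nat.exists_eq_add_of_le' hiℓ
    have hγm : γ m = fun s => c m * k ^ (2 * m) * exp ((1 - 2 * (m : ℝ)) * k * s) :=
      funext (ih m (by omega))
    rw [Nat.add_sub_cancel, hγm, mul_assoc, exp_neg_mul_pow_mul_iteratedDeriv_exp]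
    push_cast
    ring

theorem moore_gamma_exponential (k : ℝ) (hk : 0 < k)
    (γ : ℕ → ℝ → ℝ) (c : ℕ → ℝ)
    (hγ0 : ∀ t : ℝ, γ 0 t = Real.exp (k * t))
    (hγ : ∀ ℓ : ℕ, 1 ≤ ℓ → ∀ t : ℝ,
      γ ℓ t = ∑ i ∈ Finset.Icc 1 ℓ,
        (-1 / (Nat.factorial (2 * i + 1)) : ℝ) * (Real.exp (-k * t)) ^ (2 * i) *
          iteratedDeriv (2 * i) (γ (ℓ - i)) t)
    (hc0 : c 0 = 1)
    (hcrec : ∀ ℓ : ℕ, 1 ≤ ℓ →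
      c ℓ = -∑ i ∈ Finset.Icc 1 ℓ,
        ((2 * (ℓ : ℝ) - 2 * (i : ℝ) - 1) ^ (2 * i) / (Nat.factorial (2 * i + 1)) : ℝ) * c (ℓ - i)) :
    ∀ ℓ : ℕ, ∀ t : ℝ, γ ℓ t = c ℓ * k ^ (2 * ℓ) * Real.exp ((1 - 2 * (ℓ : ℝ)) * k * t) :=
  moore_gamma_exponential_general k γ c hγ0 hγ hc0 hcrec
end

section
/- Let M = max_{ξ∈[-L(0),L(0)]} Δ(ξ) - min_{ξ∈[-L(0),L(0)]} Δ(ξ) for a continuous function Δ on [-L(0), L(0)], attained at ξ₁ (max) and ξ₂ (min). Set t' = (ξ₁+ξ₂)/2 and x' = |ξ₁-ξ₂|/2. If L : ℝ → (0,∞) is differentiable with |L'| < 1 everywhere, then 0 ≤ x' ≤ L(t'), and |Δ(t'-x') - Δ(t'+x')| = M. -/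
theorem error_bound_attained (L L' : ℝ → ℝ)
    (hpos : ∀ t : ℝ, 0 < L t)
    (hderiv : ∀ t : ℝ, HasDerivAt L (L' t) t)
    (hspeed : ∀ t : ℝ, |L' t| < 1)
    (Δ : ℝ → ℝ) (hΔ : ContinuousOn Δ (Set.Icc (-L 0) (L 0)))
    (ξ₁ ξ₂ : ℝ) (hξ₁ : ξ₁ ∈ Set.Icc (-L 0) (L 0)) (hξ₂ : ξ₂ ∈ Set.Icc (-L 0) (L 0))
    (hmax : ∀ ξ ∈ Set.Icc (-L 0) (L 0), Δ ξ ≤ Δ ξ₁)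
    (hmin : ∀ ξ ∈ Set.Icc (-L 0) (L 0), Δ ξ₂ ≤ Δ ξ)
    (M t' x' : ℝ) (hM : M = Δ ξ₁ - Δ ξ₂)
    (ht' : t' = (ξ₁ + ξ₂) / 2) (hx' : x' = |ξ₁ - ξ₂| / 2) :
    0 ≤ x' ∧ x' ≤ L t' ∧ |Δ (t' - x') - Δ (t' + x')| = M := by
  have hM0 : 0 ≤ M := by
    rw [hM]; linarith [hmax ξ₂ hξ₂]
  have hx0 : 0 ≤ x' := by rw [hx']; positivity
  -- Lipschitz bound: |L t' - L 0| ≤ |t'|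
  have hlip : |L t' - L 0| ≤ |t' - 0| := by
    have := Convex.norm_image_sub_le_of_norm_hasDerivWithin_le
      (f := L) (f' := L') (C := 1) (s := (Set.univ : Set ℝ))
      (fun x _ => (hderiv x).hasDerivWithinAt)
      (fun x _ => by simpa [Real.norm_eq_abs] using (hspeed x).le)
      convex_univ (Set.mem_univ 0) (Set.mem_univ t')
    simpa [Real.norm_eq_abs] using this
  have hL : L 0 - |t'| ≤ L t' := by
    have h1 : L 0 - L t' ≤ |t'| := by
      have := abs_le.mp hlip; rw [sub_zero] at this
      linarith [this.1, this.2]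
    linarith
  obtain ⟨h1, h2⟩ := hξ₁
  obtain ⟨h3, h4⟩ := hξ₂
  have hxL : x' ≤ L t' := by
    have hx1 : t' + x' ≤ L 0 := by
      rw [ht', hx']
      rcases abs_cases (ξ₁ - ξ₂) with ⟨he, _⟩ | ⟨he, _⟩ <;> rw [he] <;> linarith
    have hx2 : -(L 0) ≤ t' - x' := by
      rw [ht', hx']
      rcases abs_cases (ξ₁ - ξ₂) with ⟨he, _⟩ | ⟨he, _⟩ <;> rw [he] <;> linarith
    have : x' ≤ L 0 - |t'| := by
      rcases abs_cases t' with ⟨he, _⟩ | ⟨he, _⟩ <;> rw [he] <;> linarith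
    linarith
  refine ⟨hx0, hxL, ?_⟩
  rcases le_total ξ₂ ξ₁ with h | h
  · have e1 : t' + x' = ξ₁ := by rw [ht', hx', abs_of_nonneg (by linarith)]; ring
    have e2 : t' - x' = ξ₂ := by rw [ht', hx', abs_of_nonneg (by linarith)]; ring
    rw [e1, e2, hM, abs_sub_comm, abs_of_nonneg (by linarith [hmax ξ₂ ⟨h3, h4⟩])]
  · have e1 : t' + x' = ξ₂ := by rw [ht', hx', abs_of_nonpos (by linarith)]; ring
    have e2 : t' - x' = ξ₁ := by rw [ht', hx', abs_of_nonpos (by linarith)]; ring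
    rw [e1, e2, hM, abs_of_nonneg (by linarith [hmax ξ₂ ⟨h3, h4⟩])]
end

section
/- Let R : ℝ → ℝ be differentiable and define new coordinates by τ + s = R(t+x) and τ - s = R(t-x). For any twice continuously differentiable function U(s,τ), the function u(x,t) = U(s(x,t), τ(x,t)) satisfies ∂²u/∂x² - ∂²u/∂t² = R'(t-x)·R'(t+x)·(∂²U/∂s² - ∂²U/∂τ²) evaluated at (s(x,t), τ(x,t)). -/
/-!
Along a curve `γ`, the chain rule gives `(f ∘ γ)'' = D²f(γ)(γ', γ') + Df(γ) γ''`.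
The curves `x ↦ (s, τ)(x, t)` and `t ↦ (s, τ)(x, t)` have the same acceleration, so the
first-order terms cancel in `u_xx - u_tt`, and their velocities `(a, b)` and `(b, a)`, with
`a ± b = R'(t ± x)`, turn the difference of Hessian terms into
`(a² - b²)(U_ss - U_ττ) = R'(t - x) R'(t + x) (U_ss - U_ττ)`.
-/

section SecondDerivativeAlongCurve

variable {𝕜 E G : Type*} [NontriviallyNormedField 𝕜]
  [NormedAddCommGroup E] [NormedSpace 𝕜 E] [NormedAddCommGroup G] [NormedSpace 𝕜 G]

theorem deriv_deriv_comp_of_contDiff_two {f : E → G} (hf : ContDiff 𝕜 2 f)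
    {γ γ' : 𝕜 → E} {γ'' : E} {x : 𝕜}
    (hγ : ∀ y, HasDerivAt γ (γ' y) y) (hγ' : HasDerivAt γ' γ'' x) :
    deriv (fun y => deriv (fun z => f (γ z)) y) x =
      fderiv 𝕜 (fderiv 𝕜 f) (γ x) (γ' x) (γ' x) + fderiv 𝕜 f (γ x) γ'' := by
  have hfirst : (fun y => deriv (fun z => f (γ z)) y) = fun y => fderiv 𝕜 f (γ y) (γ' y) :=
    funext fun y => ((hf.differentiable (by norm_num) (γ y)).hasFDerivAt.comp_hasDerivAt y
      (hγ y)).deriv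
  have hDf : Differentiable 𝕜 (fderiv 𝕜 f) :=
    (hf.fderiv_right (m := 1) (by norm_num)).differentiable (by norm_num)
  rw [hfirst]
  exact (((hDf (γ x)).hasFDerivAt.comp_hasDerivAt x (hγ x)).clm_apply hγ').deriv

theorem deriv_deriv_comp_prodMk_left {f : 𝕜 × 𝕜 → G} (hf : ContDiff 𝕜 2 f) (c s : 𝕜) :
    deriv (fun y => deriv (fun z => f (z, c)) y) s =
      fderiv 𝕜 (fderiv 𝕜 f) (s, c) (1, 0) (1, 0) := by
  rw [deriv_deriv_comp_of_contDiff_two hf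
    (fun y => (hasDerivAt_id' y).prodMk (hasDerivAt_const y c)) (hasDerivAt_const s _),
    map_zero, add_zero]

theorem deriv_deriv_comp_prodMk_right {f : 𝕜 × 𝕜 → G} (hf : ContDiff 𝕜 2 f) (c τ : 𝕜) :
    deriv (fun y => deriv (fun z => f (c, z)) y) τ =
      fderiv 𝕜 (fderiv 𝕜 f) (c, τ) (0, 1) (0, 1) := by
  rw [deriv_deriv_comp_of_contDiff_two hf
    (fun y => (hasDerivAt_const y c).prodMk (hasDerivAt_id' y)) (hasDerivAt_const τ _),
    map_zero, add_zero]

theorem apply_apply_sub_apply_swap_apply_swap (H : 𝕜 × 𝕜 →L[𝕜] 𝕜 × 𝕜 →L[𝕜] G) (a b : 𝕜) :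
    H (a, b) (a, b) - H (b, a) (b, a) =
      (a ^ 2 - b ^ 2) • (H (1, 0) (1, 0) - H (0, 1) (0, 1)) := by
  have hdecomp (a b : 𝕜) : ((a, b) : 𝕜 × 𝕜) = a • (1, 0) + b • (0, 1) := by simp
  rw [hdecomp a b, hdecomp b a]
  simp only [map_add, map_smul, add_apply, smul_apply]
  module

theorem hasDerivAt_halfSubHalfAdd {g h : 𝕜 → 𝕜} {g' h' y : 𝕜}
    (hg : HasDerivAt g g' y) (hh : HasDerivAt h h' y) :
    HasDerivAt (fun z => ((g z - h z) / 2, (g z + h z) / 2)) ((g' - h') / 2, (g' + h') / 2) y :=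
  ((hg.sub hh).div_const 2).prodMk ((hg.add hh).div_const 2)

theorem deriv_deriv_comp_halfSubHalfAdd {f : 𝕜 × 𝕜 → G} (hf : ContDiff 𝕜 2 f)
    {g h g' h' : 𝕜 → 𝕜} {g'' h'' x : 𝕜}
    (hg : ∀ y, HasDerivAt g (g' y) y) (hh : ∀ y, HasDerivAt h (h' y) y)
    (hg' : HasDerivAt g' g'' x) (hh' : HasDerivAt h' h'' x) :
    deriv (fun y => deriv (fun z => f ((g z - h z) / 2, (g z + h z) / 2)) y) x =
      fderiv 𝕜 (fderiv 𝕜 f) ((g x - h x) / 2, (g x + h x) / 2)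
          ((g' x - h' x) / 2, (g' x + h' x) / 2) ((g' x - h' x) / 2, (g' x + h' x) / 2) +
        fderiv 𝕜 f ((g x - h x) / 2, (g x + h x) / 2) ((g'' - h'') / 2, (g'' + h'') / 2) :=
  deriv_deriv_comp_of_contDiff_two hf (fun y => hasDerivAt_halfSubHalfAdd (hg y) (hh y))
    (hasDerivAt_halfSubHalfAdd hg' hh')

end SecondDerivativeAlongCurve

theorem conformal_wave_operator (R : ℝ → ℝ) (hR : ContDiff ℝ 2 R)
    (U : ℝ → ℝ → ℝ) (hU : ContDiff ℝ 2 (fun p : ℝ × ℝ => U p.1 p.2)) (x t : ℝ) :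
    deriv (fun x' => deriv (fun x'' =>
        U ((R (t + x'') - R (t - x'')) / 2) ((R (t + x'') + R (t - x'')) / 2)) x') x -
    deriv (fun t' => deriv (fun t'' =>
        U ((R (t'' + x) - R (t'' - x)) / 2) ((R (t'' + x) + R (t'' - x)) / 2)) t') t =
    deriv R (t - x) * deriv R (t + x) *
      (deriv (fun s' => deriv (fun s'' => U s'' ((R (t + x) + R (t - x)) / 2)) s')
          ((R (t + x) - R (t - x)) / 2) -
       deriv (fun τ' => deriv (fun τ'' => U ((R (t + x) - R (t - x)) / 2) τ'') τ')
          ((R (t + x) + R (t - x)) / 2)) := by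
  have hR' (y : ℝ) : HasDerivAt R (deriv R y) y := (hR.differentiable (by norm_num) y).hasDerivAt
  have hR'' (y : ℝ) : HasDerivAt (deriv R) (deriv (deriv R) y) y :=
    (hR.differentiable_deriv_two y).hasDerivAt
  have hxx := deriv_deriv_comp_halfSubHalfAdd hU (fun y => (hR' _).comp_const_add t y)
    (fun y => (hR' _).comp_const_sub t y) ((hR'' _).comp_const_add t x)
    ((hR'' _).comp_const_sub t x).neg
  have htt := deriv_deriv_comp_halfSubHalfAdd hU (fun y => (hR' _).comp_add_const y x)
    (fun y => (hR' _).comp_sub_const y x) ((hR'' _).comp_add_const t x)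
    ((hR'' _).comp_sub_const t x)
  have hss := deriv_deriv_comp_prodMk_left hU ((R (t + x) + R (t - x)) / 2)
    ((R (t + x) - R (t - x)) / 2)
  have hττ := deriv_deriv_comp_prodMk_right hU ((R (t + x) - R (t - x)) / 2)
    ((R (t + x) + R (t - x)) / 2)
  dsimp only at hxx htt hss hττ
  rw [hxx, htt, hss, hττ]
  simp only [neg_neg, sub_neg_eq_add, ← sub_eq_add_neg, add_sub_add_right_eq_sub]
  rw [apply_apply_sub_apply_swap_apply_swap, smul_eq_mul]
  ring
end
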